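/- Let σ be a lock-well-formed execution, S a set of read/write events of σ, and e1, e2 events of σ; let t1 = ThreadOf(e1) and let k = U(e1)(t1) − U(e2)(t1) (an integer). Then the number of threads t ∈ Threads(σ) such that Csmp(e1)(t) > Csmp(e2)(t) is at most min(|Threads(σ)|, max(k, 0)). -/

import Mathlib

open scoped Classical

noncomputable section

/-- An operation: read/write of a memory location, or acquire/release of a lock. -/
inductive Op : Type where
  | read (x : ℕ)
  | write (x : ℕ)
  | acq (l : ℕ)
  | rel (l : ℕ)
  deriving DecidableEq

/-- An execution: a finite sequence of (pairwise-distinct) events, each with a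
thread identifier and an operation.  Events are identified with their index
in the sequence, so trace order is the order on `Fin n`. -/
structure Execution : Type where
  n : ℕ
  thread : Fin n → ℕ
  op : Fin n → Op

/-- `o` is a release operation. -/
def Op.isRel (o : Op) : Prop := ∃ l, o = Op.rel l

/-- `o` is a read or write operation. -/
def Op.isAccess (o : Op) : Prop := ∃ x, o = Op.read x ∨ o = Op.write x

/-- `o` accesses memory location `x`. -/
def Op.accesses (o : Op) (x : ℕ) : Prop := o = Op.read x ∨ o = Op.write x

namespace Execution

/-- Event `e` operates on lock `l`. -/
def touches (σ : Execution) (l : ℕ) (e : Fin σ.n) : Prop :=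
  σ.op e = Op.acq l ∨ σ.op e = Op.rel l

/-- Lock-well-formedness: for every lock `l`, the subsequence of events on `l`
alternates acquires and releases beginning with an acquire (an event on `l` is
an acquire iff an even number of events on `l` precede it), and each release of
`l` is performed by the same thread as the immediately preceding acquire of `l`. -/
def LockWellFormed (σ : Execution) : Prop :=
  ∀ l : ℕ, ∀ e : Fin σ.n, σ.touches l e →
    ((σ.op e = Op.acq l ↔
        Even ((Finset.univ.filter (fun f => f < e ∧ σ.touches l f)).card)) ∧
     (σ.op e = Op.rel l →
        ∃ f : Fin σ.n, f < e ∧ σ.op f = Op.acq l ∧ σ.thread f = σ.thread e ∧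
          ∀ g : Fin σ.n, f < g → g < e → ¬ σ.touches l g))

/-- Nonstrict thread order `e1 ≤tho e2`. -/
def tho (σ : Execution) (e1 e2 : Fin σ.n) : Prop :=
  e1 ≤ e2 ∧ σ.thread e1 = σ.thread e2

/-- Strict thread order `e1 <tho e2`. -/
def sTho (σ : Execution) (e1 e2 : Fin σ.n) : Prop :=
  e1 < e2 ∧ σ.thread e1 = σ.thread e2

/-- One step of happens-before: thread order, or a release–acquire edge. -/
def hbStep (σ : Execution) (e1 e2 : Fin σ.n) : Prop :=
  σ.tho e1 e2 ∨ (e1 < e2 ∧ ∃ l, σ.op e1 = Op.rel l ∧ σ.op e2 = Op.acq l)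

/-- Happens-before: reflexive-transitive closure of thread order together
with release–acquire edges. -/
def hb (σ : Execution) : Fin σ.n → Fin σ.n → Prop :=
  Relation.ReflTransGen σ.hbStep

/-- The (finite) set of threads of the events of `σ`. -/
def threads (σ : Execution) : Finset ℕ :=
  Finset.univ.image σ.thread

/-- Local time `Lft(e)`: 1 plus the number of release events thread-order
before `e`. -/
def Lft (σ : Execution) (e : Fin σ.n) : ℕ :=
  (Finset.univ.filter (fun f => (σ.op f).isRel ∧ σ.sTho f e)).card + 1

/-- FastTrack timestamp `Cft(e)(t)`: max of `Lft(f)` over events `f` of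
thread `t` with `f ≤HB e` (0 if there are none). -/
def Cft (σ : Execution) (e : Fin σ.n) (t : ℕ) : ℕ :=
  (Finset.univ.filter (fun f => σ.thread f = t ∧ σ.hb f e)).sup σ.Lft

/-- `T1 ⊑ T2`: pointwise comparison over the threads of `σ`. -/
def VCle (σ : Execution) (T1 T2 : ℕ → ℕ) : Prop :=
  ∀ t ∈ σ.threads, T1 t ≤ T2 t

/-- `(e1, e2)` is a conflicting pair (with `e1 <tr e2`). -/
def Conflicting (σ : Execution) (e1 e2 : Fin σ.n) : Prop :=
  e1 < e2 ∧ σ.thread e1 ≠ σ.thread e2 ∧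
    ∃ x, (σ.op e1).accesses x ∧ (σ.op e2).accesses x ∧
      (σ.op e1 = Op.write x ∨ σ.op e2 = Op.write x)

/-- `(e1, e2)` is an HB-race. -/
def HBRace (σ : Execution) (e1 e2 : Fin σ.n) : Prop :=
  σ.Conflicting e1 e2 ∧ ¬ σ.hb e1 e2

/-- `RelAfter S`: release events that are the first release after some
sampled event, in the same thread. -/
def RelAfter (σ : Execution) (S : Finset (Fin σ.n)) : Finset (Fin σ.n) :=
  Finset.univ.filter (fun f => (σ.op f).isRel ∧
    ∃ e ∈ S, σ.sTho e f ∧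
      ∀ g : Fin σ.n, (σ.op g).isRel → σ.sTho e g → ¬ σ.sTho g f)

/-- Sampling local time `Lsmp(e)`: 1 plus the number of events of `RelAfter S`
thread-order before `e`. -/
def Lsmp (σ : Execution) (S : Finset (Fin σ.n)) (e : Fin σ.n) : ℕ :=
  ((σ.RelAfter S).filter (fun f => σ.sTho f e)).card + 1

/-- Sampling timestamp `Csmp(e)(t)`: max of `Lsmp(f)` over sampled events `f`
of thread `t` with `f ≤HB e` (0 if there are none). -/
def Csmp (σ : Execution) (S : Finset (Fin σ.n)) (e : Fin σ.n) (t : ℕ) : ℕ :=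
  (S.filter (fun f => σ.thread f = t ∧ σ.hb f e)).sup (σ.Lsmp S)

/-- `Csmp⁻(f)`: the sampling timestamp of the immediate thread-order
predecessor of `f`, or the all-zero timestamp if `f` is the first event of
its thread. -/
def CsmpPrev (σ : Execution) (S : Finset (Fin σ.n)) (f : Fin σ.n) : ℕ → ℕ :=
  if h : ∃ f' : Fin σ.n, σ.sTho f' f ∧ ∀ g : Fin σ.n, σ.sTho f' g → ¬ σ.sTho g f
  then σ.Csmp S h.choose
  else fun _ => 0

/-- `VT(e)`: total number of component updates of the sampling timestamp along
the thread of `e`, up to and including `e`. -/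
def VT (σ : Execution) (S : Finset (Fin σ.n)) (e : Fin σ.n) : ℕ :=
  ∑ f ∈ Finset.univ.filter (fun f => σ.tho f e),
    ((σ.threads).filter (fun t => σ.Csmp S f t ≠ σ.CsmpPrev S f t)).card

/-- Freshness timestamp `U(e)(t)`: max of `VT(f)` over events `f` of thread
`t` with `f ≤HB e` (0 if there are none). -/
def Ufr (σ : Execution) (S : Finset (Fin σ.n)) (e : Fin σ.n) (t : ℕ) : ℕ :=
  (Finset.univ.filter (fun f => σ.thread f = t ∧ σ.hb f e)).sup (σ.VT S)

end Execution

/-!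
If `e₁ ≤HB e₂`, no component of `Csmp(e₁)` exceeds that of `Csmp(e₂)`. Otherwise, a thread `t`
with `Csmp(e₂)(t) < Csmp(e₁)(t)` must have had its component updated at some event of `e₁`'s
thread that does not happen before `e₂`. Split the sum `VT(e₁)` according to whether the event
happens before `e₂`: the part over events that do is at least `U(e₂)` at `e₁`'s thread, and the
other part is at least the number of such threads `t`.
-/

namespace Execution

variable {σ : Execution} {S : Finset (Fin σ.n)}

def updates (σ : Execution) (S : Finset (Fin σ.n)) (f : Fin σ.n) : Finset ℕ :=
  σ.threads.filter (fun t => σ.Csmp S f t ≠ σ.CsmpPrev S f t)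

lemma vt_eq_sum_updates (e : Fin σ.n) :
    σ.VT S e = ∑ f ∈ Finset.univ.filter (fun f => σ.tho f e), (σ.updates S f).card :=
  rfl

lemma tho_trans {a b c : Fin σ.n} (hab : σ.tho a b) (hbc : σ.tho b c) : σ.tho a c :=
  ⟨hab.1.trans hbc.1, hab.2.trans hbc.2⟩

lemma hb_of_tho {a b : Fin σ.n} (h : σ.tho a b) : σ.hb a b :=
  Relation.ReflTransGen.single (Or.inl h)

lemma csmp_le_csmp_of_hb {a b : Fin σ.n} (h : σ.hb a b) (t : ℕ) :
    σ.Csmp S a t ≤ σ.Csmp S b t :=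
  Finset.sup_mono fun f hf => by
    simp only [Finset.mem_filter] at hf ⊢
    exact ⟨hf.1, hf.2.1, hf.2.2.trans h⟩

lemma csmpPrev_eq_zero_or_exists (f : Fin σ.n) :
    σ.CsmpPrev S f = (fun _ => 0) ∨ ∃ g, σ.sTho g f ∧ σ.CsmpPrev S f = σ.Csmp S g := by
  unfold CsmpPrev
  split_ifs with h
  · exact Or.inr ⟨h.choose, h.choose_spec.1, rfl⟩
  · exact Or.inl rfl

lemma vt_le_ufr (e : Fin σ.n) : σ.VT S e ≤ σ.Ufr S e (σ.thread e) :=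
  Finset.le_sup (Finset.mem_filter.mpr ⟨Finset.mem_univ _, rfl, Relation.ReflTransGen.refl⟩)

lemma exists_update_not_hb_of_csmp_lt (e₂ : Fin σ.n) (t : ℕ) (e : Fin σ.n)
    (hlt : σ.Csmp S e₂ t < σ.Csmp S e t) :
    ∃ f, σ.tho f e ∧ ¬ σ.hb f e₂ ∧ σ.Csmp S f t ≠ σ.CsmpPrev S f t := by
  induction e using WellFoundedLT.induction with
  | _ e ih =>
    by_cases hupd : σ.Csmp S e t = σ.CsmpPrev S e t
    · rcases csmpPrev_eq_zero_or_exists (S := S) e with hzero | ⟨g, hge, hprev⟩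
      · rw [hupd, hzero] at hlt
        exact absurd hlt (Nat.not_lt_zero _)
      · rw [hupd, hprev] at hlt
        obtain ⟨f, hfg, hf⟩ := ih g hge.1 hlt
        exact ⟨f, tho_trans hfg ⟨hge.1.le, hge.2⟩, hf⟩
    · exact ⟨e, ⟨le_rfl, rfl⟩, fun h => (csmp_le_csmp_of_hb h t).not_gt hlt, hupd⟩

lemma card_csmp_lt_le_sum_updates (e₁ e₂ : Fin σ.n) :
    (σ.threads.filter (fun t => σ.Csmp S e₂ t < σ.Csmp S e₁ t)).card ≤
      ∑ f ∈ Finset.univ.filter (fun f => σ.tho f e₁ ∧ ¬ σ.hb f e₂), (σ.updates S f).card := by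
  refine le_trans (Finset.card_le_card ?_) Finset.card_biUnion_le
  intro t ht
  rw [Finset.mem_filter] at ht
  obtain ⟨f, hfe, hf, hupd⟩ := exists_update_not_hb_of_csmp_lt e₂ t e₁ ht.2
  exact Finset.mem_biUnion.mpr
    ⟨f, by simp [hfe, hf], Finset.mem_filter.mpr ⟨ht.1, hupd⟩⟩

-- Every event of `e₁`'s thread that happens before `e₂` precedes `e₁`, as `¬ e₁ ≤HB e₂`.
lemma ufr_le_sum_updates_of_not_hb {e₁ e₂ : Fin σ.n} (h : ¬ σ.hb e₁ e₂) :
    σ.Ufr S e₂ (σ.thread e₁) ≤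
      ∑ f ∈ Finset.univ.filter (fun f => σ.tho f e₁ ∧ σ.hb f e₂), (σ.updates S f).card := by
  refine Finset.sup_le fun f hf => Finset.sum_le_sum_of_subset fun g hg => ?_
  simp only [Finset.mem_filter, Finset.mem_univ, true_and] at hf hg ⊢
  have hfe₁ : f ≤ e₁ :=
    le_of_not_ge fun he => h ((hb_of_tho ⟨he, hf.1.symm⟩).trans hf.2)
  exact ⟨tho_trans hg ⟨hfe₁, hf.1⟩, (hb_of_tho hg).trans hf.2⟩

lemma card_csmp_lt_le_ufr_sub (e₁ e₂ : Fin σ.n) :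
    (σ.threads.filter (fun t => σ.Csmp S e₂ t < σ.Csmp S e₁ t)).card ≤
      σ.Ufr S e₁ (σ.thread e₁) - σ.Ufr S e₂ (σ.thread e₁) := by
  by_cases h : σ.hb e₁ e₂
  · have hempty : σ.threads.filter (fun t => σ.Csmp S e₂ t < σ.Csmp S e₁ t) = ∅ :=
      Finset.filter_false_of_mem fun t _ => (csmp_le_csmp_of_hb h t).not_gt
    simp [hempty]
  · have hsplit := Finset.sum_filter_add_sum_filter_not
      (Finset.univ.filter (fun f => σ.tho f e₁)) (fun f => σ.hb f e₂)
      (fun f => (σ.updates S f).card)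
    simp only [Finset.filter_filter] at hsplit
    have hvt := vt_eq_sum_updates (S := S) e₁
    have hahead := card_csmp_lt_le_sum_updates (S := S) e₁ e₂
    have hbefore := ufr_le_sum_updates_of_not_hb (S := S) h
    have hufr := vt_le_ufr (S := S) e₁
    omega

end Execution

theorem stmt17_general (σ : Execution)
    (S : Finset (Fin σ.n))
    (e1 e2 : Fin σ.n) (k : ℤ)
    (hk : k = (σ.Ufr S e1 (σ.thread e1) : ℤ) - (σ.Ufr S e2 (σ.thread e1) : ℤ)) :
    (((σ.threads).filter (fun t => σ.Csmp S e2 t < σ.Csmp S e1 t)).card : ℤ) ≤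
      min ((σ.threads).card : ℤ) (max k 0) := by
  have hthreads := Finset.card_filter_le σ.threads (fun t => σ.Csmp S e2 t < σ.Csmp S e1 t)
  have hufr := Execution.card_csmp_lt_le_ufr_sub (S := S) e1 e2
  omega

/-- With `t1 = ThreadOf e1` and
`k = U(e1)(t1) − U(e2)(t1)` (as an integer), the number of threads `t` with
`Csmp(e1)(t) > Csmp(e2)(t)` is at most `min(|Threads σ|, max(k, 0))`. -/
theorem stmt17 (σ : Execution) (hwf : σ.LockWellFormed)
    (S : Finset (Fin σ.n)) (hS : ∀ e ∈ S, (σ.op e).isAccess)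
    (e1 e2 : Fin σ.n) (k : ℤ)
    (hk : k = (σ.Ufr S e1 (σ.thread e1) : ℤ) - (σ.Ufr S e2 (σ.thread e1) : ℤ)) :
    (((σ.threads).filter (fun t => σ.Csmp S e2 t < σ.Csmp S e1 t)).card : ℤ) ≤
      min ((σ.threads).card : ℤ) (max k 0) :=
  stmt17_general σ S e1 e2 k hk
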